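/- Let φ be a continuous flow on a closed surface with the oriented shadowing property, and let p be a singularity admitting a closed disk neighborhood D containing no α- or ω-limit point except p. If p is neither asymptotically stable nor backward asymptotically stable, then there exists x ∈ ∂D whose negative orbit is contained in D with φ(t,x) → p as t → -∞, and there exists y ∈ ∂D whose positive orbit is contained in D with φ(t,y) → p as t → +∞. -/

import Mathlib

open Set Filter Metric Topology

/-- A continuous flow on `M`. -/
def IsFlow {M : Type*} [TopologicalSpace M] (φ : ℝ × M → M) : Prop :=
  Continuous φ ∧ (∀ x, φ (0, x) = x) ∧ ∀ s t x, φ (s + t, x) = φ (s, φ (t, x))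

/-- Orientation preserving homeomorphism of `ℝ`. -/
def IsRep (f : ℝ → ℝ) : Prop :=
  Continuous f ∧ Function.Bijective f ∧ StrictMono f

/-- Element of `Rep(ε)`: all difference quotients within `ε` of `1`. -/
def IsRepE (ε : ℝ) (f : ℝ → ℝ) : Prop :=
  IsRep f ∧ ∀ a b : ℝ, b < a → |(f a - f b) / (a - b) - 1| < ε

/-- A `d`-pseudotrajectory of the flow `φ`. -/
def IsPseudo {M : Type*} [PseudoMetricSpace M] (φ : ℝ × M → M) (d : ℝ) (ξ : ℝ → M) : Prop :=
  ∀ t : ℝ, ∀ s ∈ Set.Icc (0:ℝ) 1, dist (ξ (t + s)) (φ (s, ξ t)) < d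

/-- The standard shadowing property. -/
def StandardShadowing {M : Type*} [PseudoMetricSpace M] (φ : ℝ × M → M) : Prop :=
  ∀ ε > 0, ∃ d > 0, ∀ ξ : ℝ → M, IsPseudo φ d ξ →
    ∃ x : M, ∃ h : ℝ → ℝ, IsRepE ε h ∧ ∀ t, dist (ξ t) (φ (h t, x)) < ε

/-- The oriented shadowing property. -/
def OrientedShadowing {M : Type*} [PseudoMetricSpace M] (φ : ℝ × M → M) : Prop :=
  ∀ ε > 0, ∃ d > 0, ∀ ξ : ℝ → M, IsPseudo φ d ξ →
    ∃ x : M, ∃ h : ℝ → ℝ, IsRep h ∧ ∀ t, dist (ξ t) (φ (h t, x)) < ε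

/-- A singularity (fixed point) of the flow. -/
def IsSingularity {M : Type*} (φ : ℝ × M → M) (p : M) : Prop :=
  ∀ t : ℝ, φ (t, p) = p

/-- A closed (periodic, non-fixed) orbit of the flow. -/
def IsClosedOrbit {M : Type*} (φ : ℝ × M → M) (Λ : Set M) : Prop :=
  ∃ (x₀ : M) (T : ℝ), 0 < T ∧ φ (T, x₀) = x₀ ∧ (∀ t ∈ Set.Ioo 0 T, φ (t, x₀) ≠ x₀) ∧
    Λ = Set.range (fun t : ℝ => φ (t, x₀))

/-- A critical element: a singularity or a closed orbit. -/
def IsCriticalElement {M : Type*} (φ : ℝ × M → M) (Λ : Set M) : Prop :=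
  (∃ p, IsSingularity φ p ∧ Λ = {p}) ∨ IsClosedOrbit φ Λ

/-- A nonwandering point of the flow. -/
def IsNonWandering {M : Type*} [TopologicalSpace M] (φ : ℝ × M → M) (x : M) : Prop :=
  ∀ V : Set M, IsOpen V → x ∈ V → ∀ T > 0, ∃ t > T, ∃ y ∈ V, φ (t, y) ∈ V

/-- The ω-limit set of a point. -/
def OmegaLim {M : Type*} [PseudoMetricSpace M] (φ : ℝ × M → M) (x : M) : Set M :=
  {y | ∀ ε > 0, ∀ T : ℝ, ∃ t > T, dist (φ (t, x)) y < ε}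

/-- The α-limit set of a point. -/
def AlphaLim {M : Type*} [PseudoMetricSpace M] (φ : ℝ × M → M) (x : M) : Set M :=
  {y | ∀ ε > 0, ∀ T : ℝ, ∃ t < T, dist (φ (t, x)) y < ε}

/-- Asymptotic stability of a compact invariant set `K`. -/
def IsAsympStable {M : Type*} [MetricSpace M] (φ : ℝ × M → M) (K : Set M) : Prop :=
  ∀ V : Set M, IsOpen V → K ⊆ V → ∃ U : Set M, IsOpen U ∧ K ⊆ U ∧ ∀ x ∈ U,
    (∀ t ≥ (0:ℝ), φ (t, x) ∈ V) ∧
    Tendsto (fun t => Metric.infDist (φ (t, x)) K) atTop (nhds 0)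

/-- Backward asymptotic stability of a compact invariant set `K`. -/
def IsBackAsympStable {M : Type*} [MetricSpace M] (φ : ℝ × M → M) (K : Set M) : Prop :=
  ∀ V : Set M, IsOpen V → K ⊆ V → ∃ U : Set M, IsOpen U ∧ K ⊆ U ∧ ∀ x ∈ U,
    (∀ t ≤ (0:ℝ), φ (t, x) ∈ V) ∧
    Tendsto (fun t => Metric.infDist (φ (t, x)) K) atBot (nhds 0)

/-- A closed neighborhood of `p` homeomorphic to a closed 2-disk. -/
def IsDiskNbhd {M : Type*} [MetricSpace M] (p : M) (D : Set M) : Prop :=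
  D ∈ nhds p ∧ IsClosed D ∧
    Nonempty (D ≃ₜ (Metric.closedBall (0 : EuclideanSpace ℝ (Fin 2)) 1))

/-- `D` contains no α- or ω-limit point except `p`. -/
def NoLimitPointsExcept {M : Type*} [MetricSpace M] (φ : ℝ × M → M) (p : M)
    (D : Set M) : Prop :=
  ∀ x y : M, y ∈ D → y ∈ AlphaLim φ x ∪ OmegaLim φ x → y = p

/-!
If `p` is not asymptotically stable, points arbitrarily close to `p` leave a small open
neighbourhood `W ⊆ D` of `p`. Since `p` is fixed, their first exit times tend to infinity, so a
limit of the exit points is a point `y ∉ W` whose whole negative semi-orbit stays in `D`. Follow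
`y` forward until it first meets `∂D`: that point is the required `x`. If the forward orbit of `y`
never meets `∂D`, the orbit of `y` is a loop homoclinic to `p` in the interior of `D`; a periodic
pseudo-orbit running along it is shadowed by a true orbit with an ω-limit point in `D` close to
`y`, hence different from `p`, which is impossible. Because `p` is the only limit point in `D`,
every semi-orbit trapped in `D` converges to `p`, and the claim about `y` is the claim about `x`
for the reversed flow.
-/

section Topology

variable {X : Type*} [TopologicalSpace X]

lemma exists_first_mem_of_isClosed {f : ℝ → X} (hf : Continuous f) {C : Set X} (hC : IsClosed C)
    {t : ℝ} (ht0 : 0 ≤ t) (ht : f t ∈ C) :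
    ∃ τ ∈ Icc 0 t, f τ ∈ C ∧ ∀ s ∈ Ico 0 τ, f s ∉ C := by
  have hS : IsCompact (Icc 0 t ∩ f ⁻¹' C) := isCompact_Icc.inter_right (hC.preimage hf)
  obtain ⟨hτ, hτC⟩ := hS.sInf_mem ⟨t, ⟨ht0, le_rfl⟩, ht⟩
  refine ⟨_, hτ, hτC, fun s hs hsC => hs.2.not_ge ?_⟩
  exact csInf_le hS.bddBelow ⟨⟨hs.1, hs.2.le.trans hτ.2⟩, hsC⟩

lemma IsPreconnected.mapsTo_interior_of_forall_notMem_frontier {α : Type*} [TopologicalSpace α]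
    {f : α → X} {I : Set α} (hI : IsPreconnected I) (hf : ContinuousOn f I) {D : Set X} {a : α}
    (ha : a ∈ I) (hfa : f a ∈ D) (hfr : ∀ s ∈ I, f s ∉ frontier D) : MapsTo f I (interior D) := by
  have hD : ∀ s ∈ I, f s ∈ closure D → f s ∈ interior D := fun s hs hsD => by
    by_contra h
    exact hfr s hs ⟨hsD, h⟩
  refine mapsTo_iff_image_subset.2 <| (hI.image f hf).subset_of_closure_inter_subset
    isOpen_interior ⟨f a, mem_image_of_mem f ha, hD a ha (subset_closure hfa)⟩ ?_
  rintro _ ⟨hcl, s, hs, rfl⟩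
  exact hD s hs (closure_mono interior_subset hcl)

end Topology

section LimitSets

variable {M : Type*} [PseudoMetricSpace M] {φ : ℝ × M → M} {x q : M}

lemma mem_omegaLim_of_mapClusterPt (h : MapClusterPt q atTop fun t => φ (t, x)) :
    q ∈ OmegaLim φ x := fun _ hε T =>
  frequently_atTop'.1 (mapClusterPt_iff_frequently.1 h _ (ball_mem_nhds q hε)) T

lemma mem_alphaLim_of_mapClusterPt (h : MapClusterPt q atBot fun t => φ (t, x)) :
    q ∈ AlphaLim φ x := fun _ hε T =>
  frequently_atBot'.1 (mapClusterPt_iff_frequently.1 h _ (ball_mem_nhds q hε)) T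

lemma exists_mem_omegaLim_dist_le [CompactSpace M] {y : M} {ε : ℝ} {u : ℕ → ℝ}
    (hu : Tendsto u atTop atTop) (hy : ∀ k, dist (φ (u k, x)) y ≤ ε) :
    ∃ q ∈ OmegaLim φ x, dist q y ≤ ε := by
  obtain ⟨q, -, hq⟩ := isCompact_univ.exists_mapClusterPt (f := atTop)
    (u := fun k => φ (u k, x)) (by simp)
  exact ⟨q, mem_omegaLim_of_mapClusterPt (hq.of_comp hu),
    isClosed_closedBall.mem_of_mapClusterPt hq (Eventually.of_forall hy)⟩

end LimitSets

section Flow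

variable {M : Type*} [PseudoMetricSpace M] {φ : ℝ × M → M}

lemma Continuous.exists_pos_forall_dist_flow_lt [CompactSpace M] (hφ : Continuous φ) {d : ℝ}
    (hd : 0 < d) : ∃ η > 0, ∀ a b : M, dist a b < η → ∀ s ∈ Icc (0 : ℝ) 1,
      dist (φ (s, a)) (φ (s, b)) < d := by
  obtain ⟨η, hη, h⟩ := Metric.uniformContinuousOn_iff.1
    ((isCompact_Icc.prod isCompact_univ).uniformContinuousOn_of_continuous hφ.continuousOn) d hd
  refine ⟨η, hη, fun a b hab s hs => h (s, a) ⟨hs, mem_univ a⟩ (s, b) ⟨hs, mem_univ b⟩ ?_⟩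
  simpa [Prod.dist_eq] using hab

lemma IsSingularity.eventually_forall_mem (hφ : Continuous φ) {p : M} (hp : IsSingularity φ p)
    {W : Set M} (hW : W ∈ 𝓝 p) {K : Set ℝ} (hK : IsCompact K) :
    ∀ᶠ x in 𝓝 p, ∀ s ∈ K, φ (s, x) ∈ W := by
  refine hK.eventually_forall_of_forall_eventually fun s _ => ?_
  have hcont : Continuous fun z : M × ℝ => φ (z.2, z.1) := by fun_prop
  exact hcont.continuousAt.preimage_mem_nhds (by simpa [hp s] using hW)

end Flow

section ToIcoMod

variable {α : Type*} [AddCommGroup α] [LinearOrder α] [IsOrderedAddMonoid α] [Archimedean α]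
  {p : α} (hp : 0 < p) {a t s : α}

lemma toIcoMod_add_of_lt (hs : 0 ≤ s) (h : toIcoMod hp a t + s < a + p) :
    toIcoMod hp a (t + s) = toIcoMod hp a t + s := by
  have := (toIcoMod_mem_Ico hp a t).1
  rw [toIcoMod_eq_iff]
  refine ⟨⟨this.trans (le_add_of_nonneg_right hs), h⟩, toIcoDiv hp a t, ?_⟩
  rw [← self_sub_toIcoMod hp a t]
  abel

lemma toIcoMod_add_of_le (hs : s ≤ p) (h : a + p ≤ toIcoMod hp a t + s) :
    toIcoMod hp a (t + s) = toIcoMod hp a t + s - p := by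
  have := (toIcoMod_mem_Ico hp a t).2
  rw [toIcoMod_eq_iff]
  refine ⟨⟨le_sub_iff_add_le.2 h, sub_lt_iff_lt_add.2 (add_lt_add_of_lt_of_le this hs)⟩,
    toIcoDiv hp a t + 1, ?_⟩
  rw [add_zsmul, one_zsmul, ← self_sub_toIcoMod hp a t]
  abel

end ToIcoMod

section Shadowing

variable {M : Type*} [PseudoMetricSpace M] {φ : ℝ × M → M}

lemma isPseudo_orbit_toIcoMod (hφ : IsFlow φ) {d η : ℝ} (hd : 0 < d)
    (hη : ∀ a b : M, dist a b < η → ∀ s ∈ Icc (0 : ℝ) 1, dist (φ (s, a)) (φ (s, b)) < d)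
    {y : M} {a b : ℝ} (hab : 1 ≤ b - a) (hy : dist (φ (a, y)) (φ (b, y)) < η) :
    IsPseudo φ d fun t => φ (toIcoMod (one_pos.trans_le hab) a t, y) := by
  obtain ⟨-, -, hadd⟩ := hφ
  intro t s ⟨hs0, hs1⟩
  dsimp only
  set w := toIcoMod (one_pos.trans_le hab) a t
  have hw := toIcoMod_mem_Ico (one_pos.trans_le hab) a t
  rw [← hadd]
  rcases lt_or_ge (w + s) (a + (b - a)) with hlt | hge
  · rw [toIcoMod_add_of_lt _ hs0 hlt, add_comm s w, dist_self]
    exact hd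
  · rw [toIcoMod_add_of_le _ (hs1.trans hab) hge]
    -- past the end of the segment the loop jumps from `φ (b, y)` back to `φ (a, y)`
    have hr : w + s - b ∈ Icc (0 : ℝ) 1 := ⟨by linarith, by linarith [hw.2]⟩
    have hjump : φ (w + s - (b - a), y) = φ (w + s - b, φ (a, y)) := by
      rw [← hadd]; ring_nf
    have hstay : φ (s + w, y) = φ (w + s - b, φ (b, y)) := by rw [← hadd]; ring_nf
    rw [hjump, hstay]
    exact hη _ _ hy _ hr

lemma exists_mem_omegaLim_dist_le_of_homoclinic [CompactSpace M] (hφ : IsFlow φ)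
    (hsh : OrientedShadowing φ) {y p : M} (htop : Tendsto (fun t => φ (t, y)) atTop (𝓝 p))
    (hbot : Tendsto (fun t => φ (t, y)) atBot (𝓝 p)) {ε : ℝ} (hε : 0 < ε) :
    ∃ x, ∃ q ∈ OmegaLim φ x, dist q y ≤ ε := by
  obtain ⟨d, hd, hshadow⟩ := hsh ε hε
  obtain ⟨η, hη, hunif⟩ := hφ.1.exists_pos_forall_dist_flow_lt hd
  have hends : Tendsto (fun T => dist (φ (-T, y)) (φ (T, y))) atTop (𝓝 0) := by
    simpa using (hbot.comp tendsto_neg_atTop_atBot).dist htop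
  obtain ⟨T, hT, hTη⟩ :=
    ((eventually_ge_atTop 1).and (hends.eventually (gt_mem_nhds hη))).exists
  have hab : 1 ≤ T - -T := by linarith
  obtain ⟨x, h, ⟨-, hbij, hmono⟩, hx⟩ := hshadow _ (isPseudo_orbit_toIcoMod hφ hd hunif hab hTη)
  have hloop : ∀ k : ℕ, toIcoMod (one_pos.trans_le hab) (-T) (k • (T - -T)) = 0 := fun k => by
    rw [← zero_add (k • _), toIcoMod_add_nsmul, toIcoMod_eq_self]
    constructor <;> linarith
  have hh : Tendsto h atTop atTop :=
    tendsto_atTop_atTop_of_monotone hmono.monotone fun b => ⟨_, (hbij.2 b).choose_spec.ge⟩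
  have hperiods : Tendsto (fun k : ℕ => k • (T - -T)) atTop atTop := by
    simpa only [nsmul_eq_mul] using tendsto_natCast_atTop_atTop.atTop_mul_const (by linarith)
  refine ⟨x, exists_mem_omegaLim_dist_le (hh.comp hperiods) fun k => ?_⟩
  have hk := hx (k • (T - -T))
  rw [hloop, hφ.2.1, dist_comm] at hk
  exact hk.le

end Shadowing

section FirstExit

variable {M : Type*} [PseudoMetricSpace M] [CompactSpace M] {φ : ℝ × M → M} {p : M}

lemma IsSingularity.exists_notMem_backward_mem_closure (hφ : IsFlow φ) (hp : IsSingularity φ p)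
    {W : Set M} (hW : IsOpen W) (hpW : p ∈ W)
    (hexit : ∃ᶠ x in 𝓝 p, ∃ t ≥ (0 : ℝ), φ (t, x) ∉ W) :
    ∃ y ∉ W, ∀ s ≤ (0 : ℝ), φ (s, y) ∈ closure W := by
  obtain ⟨hc, -, hadd⟩ := hφ
  obtain ⟨X, hXp, hXexit⟩ := exists_seq_forall_of_frequently hexit
  choose t ht0 htW using hXexit
  choose σ hσ hσW hσbefore using fun n =>
    exists_first_mem_of_isClosed (f := fun s => φ (s, X n)) (by fun_prop) hW.isClosed_compl
      (ht0 n) (htW n)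
  simp only [mem_compl_iff, not_not] at hσW hσbefore
  -- orbits starting near the fixed point `p` need a long time to leave `W`
  have hσ_tendsto : ∀ T, ∀ᶠ n in atTop, T < σ n := fun T =>
    (hXp.eventually (hp.eventually_forall_mem hc (hW.mem_nhds hpW) isCompact_Icc)).mono
      fun n hn => not_le.1 fun hle => hσW n (hn _ ⟨(hσ n).1, hle⟩)
  obtain ⟨y, -, hy⟩ := isCompact_univ.exists_mapClusterPt (f := atTop)
    (u := fun n => φ (σ n, X n)) (by simp)
  have hneg : ∀ s < (0 : ℝ), φ (s, y) ∈ closure W := fun s hs => by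
    have hcl : MapClusterPt (φ (s, y)) atTop fun n => φ (s, φ (σ n, X n)) :=
      hy.continuousAt_comp (f := fun z => φ (s, z)) (by fun_prop)
    refine isClosed_closure.mem_of_mapClusterPt hcl ((hσ_tendsto (-s)).mono fun n hn => ?_)
    rw [← hadd]
    exact subset_closure (hσbefore n _ ⟨by linarith, by linarith⟩)
  refine ⟨y, hW.isClosed_compl.mem_of_mapClusterPt hy (Eventually.of_forall hσW), fun s hs => ?_⟩
  have hIic : Iic (0 : ℝ) ⊆ (fun s => φ (s, y)) ⁻¹' closure W := by
    rw [← closure_Iio]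
    exact (isClosed_closure.preimage (by fun_prop)).closure_subset_iff.2 hneg
  exact hIic hs

end FirstExit

section NoLimitPoints

variable {M : Type*} [MetricSpace M] [CompactSpace M] {φ : ℝ × M → M} {p : M} {D : Set M}

lemma NoLimitPointsExcept.tendsto_atTop (hlim : NoLimitPointsExcept φ p D) (hD : IsClosed D)
    {y : M} (hy : ∀ᶠ t in atTop, φ (t, y) ∈ D) : Tendsto (fun t => φ (t, y)) atTop (𝓝 p) :=
  hD.isCompact.tendsto_nhds_of_unique_mapClusterPt hy fun q hq hcl =>
    hlim y q hq (Or.inr (mem_omegaLim_of_mapClusterPt hcl))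

lemma NoLimitPointsExcept.tendsto_atBot (hlim : NoLimitPointsExcept φ p D) (hD : IsClosed D)
    {y : M} (hy : ∀ᶠ t in atBot, φ (t, y) ∈ D) : Tendsto (fun t => φ (t, y)) atBot (𝓝 p) :=
  hD.isCompact.tendsto_nhds_of_unique_mapClusterPt hy fun q hq hcl =>
    hlim y q hq (Or.inl (mem_alphaLim_of_mapClusterPt hcl))

lemma NoLimitPointsExcept.exists_frequently_exits (hlim : NoLimitPointsExcept φ p D)
    (hDp : D ∈ 𝓝 p) (hD : IsClosed D) (hns : ¬ IsAsympStable φ {p}) :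
    ∃ W, IsOpen W ∧ p ∈ W ∧ W ⊆ D ∧ ∃ᶠ x in 𝓝 p, ∃ t ≥ (0 : ℝ), φ (t, x) ∉ W := by
  simp only [IsAsympStable, singleton_subset_iff, not_forall, not_exists, not_and] at hns
  obtain ⟨V, hV, hpV, hunstable⟩ := hns
  refine ⟨V ∩ interior D, hV.inter isOpen_interior, ⟨hpV, mem_interior_iff_mem_nhds.2 hDp⟩,
    inter_subset_right.trans interior_subset, frequently_nhds_iff.2 fun U hpU hU => ?_⟩
  obtain ⟨x, ⟨hxU, -⟩, hx⟩ := hunstable (U ∩ (V ∩ interior D))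
    (hU.inter (hV.inter isOpen_interior)) ⟨hpU, hpV, mem_interior_iff_mem_nhds.2 hDp⟩
  refine ⟨x, hxU, ?_⟩
  by_contra! hstay
  refine hx (fun t ht => (hstay t ht).1) ?_
  have hD' : ∀ᶠ t in atTop, φ (t, x) ∈ D :=
    eventually_atTop.2 ⟨0, fun t ht => interior_subset (hstay t ht).2⟩
  simpa only [infDist_singleton] using tendsto_iff_dist_tendsto_zero.1 (hlim.tendsto_atTop hD hD')

end NoLimitPoints

section BaseOrbits

variable {M : Type*} [MetricSpace M] [CompactSpace M] {φ : ℝ × M → M} {p : M} {D : Set M}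

lemma exists_frontier_backward_mem_of_backward_mem (hφ : IsFlow φ) (hsh : OrientedShadowing φ)
    (hD : IsClosed D) (hlim : NoLimitPointsExcept φ p D) {y : M} (hyp : y ≠ p)
    (hy : ∀ s ≤ (0 : ℝ), φ (s, y) ∈ D) : ∃ x ∈ frontier D, ∀ t ≤ (0 : ℝ), φ (t, x) ∈ D := by
  have horbit : Continuous fun t => φ (t, y) := by have := hφ.1; fun_prop
  have hy0 : φ (0, y) ∈ D := hy 0 le_rfl
  by_cases hhit : ∃ t ≥ (0 : ℝ), φ (t, y) ∈ frontier D
  · obtain ⟨t, ht0, ht⟩ := hhit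
    obtain ⟨τ, hτ, hτD, hbefore⟩ := exists_first_mem_of_isClosed horbit isClosed_frontier ht0 ht
    refine ⟨φ (τ, y), hτD, fun s hs => ?_⟩
    rw [← hφ.2.2]
    rcases lt_or_ge (s + τ) 0 with hneg | hpos
    · exact hy _ hneg.le
    rcases hs.lt_or_eq with hs | rfl
    · have hI : MapsTo (fun t => φ (t, y)) (Ico 0 τ) (interior D) :=
        isPreconnected_Ico.mapsTo_interior_of_forall_notMem_frontier horbit.continuousOn
          ⟨le_rfl, by linarith⟩ hy0 hbefore
      exact interior_subset (hI ⟨hpos, by linarith⟩)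
    · rw [zero_add]
      exact hD.frontier_subset hτD
  · push Not at hhit
    have hI : MapsTo (fun t => φ (t, y)) (Ici 0) (interior D) :=
      isPreconnected_Ici.mapsTo_interior_of_forall_notMem_frontier horbit.continuousOn
        self_mem_Ici hy0 hhit
    have hyD : y ∈ interior D := by simpa [hφ.2.1] using hI self_mem_Ici
    obtain ⟨ρ, hρ, hρD⟩ := nhds_basis_closedBall.mem_iff.1 (mem_interior_iff_mem_nhds.1 hyD)
    have hdist : 0 < dist y p := dist_pos.2 hyp
    obtain ⟨x, q, hq, hqy⟩ := exists_mem_omegaLim_dist_le_of_homoclinic hφ hsh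
      (hlim.tendsto_atTop hD (eventually_atTop.2 ⟨0, fun t ht => interior_subset (hI ht)⟩))
      (hlim.tendsto_atBot hD (eventually_atBot.2 ⟨0, hy⟩)) (lt_min hρ (half_pos hdist))
    have hqD : q ∈ D := hρD (closedBall_subset_closedBall (min_le_left _ _) hqy)
    rw [hlim x q hqD (Or.inr hq), dist_comm] at hqy
    linarith [min_le_right ρ (dist y p / 2)]

lemma exists_frontier_backward_mem_of_not_isAsympStable (hφ : IsFlow φ)
    (hsh : OrientedShadowing φ) (hp : IsSingularity φ p) (hDp : D ∈ 𝓝 p) (hD : IsClosed D)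
    (hlim : NoLimitPointsExcept φ p D) (hns : ¬ IsAsympStable φ {p}) :
    ∃ x ∈ frontier D, ∀ t ≤ (0 : ℝ), φ (t, x) ∈ D := by
  obtain ⟨W, hW, hpW, hWD, hexit⟩ := hlim.exists_frequently_exits hDp hD hns
  obtain ⟨y, hyW, hy⟩ := hp.exists_notMem_backward_mem_closure hφ hW hpW hexit
  exact exists_frontier_backward_mem_of_backward_mem hφ hsh hD hlim
    (ne_of_mem_of_not_mem hpW hyW).symm fun s hs => closure_minimal hWD hD (hy s hs)

end BaseOrbits

def revFlow {M : Type*} (φ : ℝ × M → M) : ℝ × M → M := fun q => φ (-q.1, q.2)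

section Reversal

variable {M : Type*} {φ : ℝ × M → M}

@[simp]
lemma revFlow_apply (t : ℝ) (x : M) : revFlow φ (t, x) = φ (-t, x) := rfl

lemma IsFlow.rev [TopologicalSpace M] (hφ : IsFlow φ) : IsFlow (revFlow φ) := by
  obtain ⟨hc, h0, hadd⟩ := hφ
  refine ⟨by unfold revFlow; fun_prop, fun x => by simp [h0], fun s t x => ?_⟩
  simp only [revFlow_apply, neg_add, hadd]

lemma IsSingularity.rev {p : M} (hp : IsSingularity φ p) : IsSingularity (revFlow φ) p :=
  fun t => hp (-t)

lemma NoLimitPointsExcept.rev [MetricSpace M] {p : M} {D : Set M}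
    (hlim : NoLimitPointsExcept φ p D) : NoLimitPointsExcept (revFlow φ) p D := by
  rintro x q hqD (hα | hω)
  · refine hlim x q hqD (Or.inr fun ε hε T => ?_)
    obtain ⟨t, ht, hd⟩ := hα ε hε (-T)
    exact ⟨-t, by linarith, hd⟩
  · refine hlim x q hqD (Or.inl fun ε hε T => ?_)
    obtain ⟨t, ht, hd⟩ := hω ε hε (-T)
    exact ⟨-t, by linarith, hd⟩

lemma IsAsympStable.isBackAsympStable_of_rev [MetricSpace M] {K : Set M}
    (hK : IsAsympStable (revFlow φ) K) : IsBackAsympStable φ K := fun V hV hKV => by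
  obtain ⟨U, hU, hKU, hstable⟩ := hK V hV hKV
  refine ⟨U, hU, hKU, fun x hx => ⟨fun t ht => ?_, ?_⟩⟩
  · simpa using (hstable x hx).1 (-t) (neg_nonneg.2 ht)
  · simpa [Function.comp_def] using (hstable x hx).2.comp tendsto_neg_atBot_atTop

lemma OrientedShadowing.rev [PseudoMetricSpace M] [CompactSpace M] (hφ : IsFlow φ)
    (hsh : OrientedShadowing φ) : OrientedShadowing (revFlow φ) := by
  obtain ⟨hc, h0, hadd⟩ := hφ
  intro ε hε
  obtain ⟨d, hd, hshadow⟩ := hsh ε hε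
  obtain ⟨η, hη, hunif⟩ := hc.exists_pos_forall_dist_flow_lt hd
  refine ⟨η, hη, fun ξ hξ => ?_⟩
  -- flowing the reversed pseudo-orbit condition forward by `s` gives one for `t ↦ ξ (-t)`
  have hξrev : IsPseudo φ d fun t => ξ (-t) := fun t s hs => by
    have h := hunif _ _ (hξ (-(t + s)) s hs) s hs
    rw [show -(t + s) + s = -t by ring, revFlow_apply, ← hadd, add_neg_cancel, h0,
      dist_comm] at h
    exact h
  obtain ⟨x, h, ⟨hhc, hbij, hmono⟩, hx⟩ := hshadow _ hξrev
  have hrep : IsRep fun t => -h (-t) :=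
    ⟨by fun_prop, ⟨fun u v huv => neg_injective (hbij.1 (neg_injective huv)),
      fun c => ⟨-(hbij.2 (-c)).choose, by simp [(hbij.2 (-c)).choose_spec]⟩⟩,
      fun u v huv => neg_lt_neg (hmono (neg_lt_neg huv))⟩
  exact ⟨x, _, hrep, fun t => by simpa using hx (-t)⟩

end Reversal

theorem exists_base_orbits_general {M : Type*} [MetricSpace M] [CompactSpace M]
    (φ : ℝ × M → M) (hφ : IsFlow φ) (hsh : OrientedShadowing φ)
    (p : M) (hp : IsSingularity φ p)
    (D : Set M) (hD : IsDiskNbhd p D) (hlim : NoLimitPointsExcept φ p D)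
    (hns : ¬ IsAsympStable φ {p}) (hnu : ¬ IsBackAsympStable φ {p}) :
    (∃ x ∈ frontier D, (∀ t ≤ (0:ℝ), φ (t, x) ∈ D) ∧
        Tendsto (fun t => φ (t, x)) atBot (nhds p)) ∧
    (∃ y ∈ frontier D, (∀ t ≥ (0:ℝ), φ (t, y) ∈ D) ∧
        Tendsto (fun t => φ (t, y)) atTop (nhds p)) := by
  obtain ⟨hDp, hDc, -⟩ := hD
  obtain ⟨x, hx, hxD⟩ :=
    exists_frontier_backward_mem_of_not_isAsympStable hφ hsh hp hDp hDc hlim hns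
  obtain ⟨y, hy, hyD⟩ := exists_frontier_backward_mem_of_not_isAsympStable hφ.rev (hsh.rev hφ)
    hp.rev hDp hDc hlim.rev fun h => hnu h.isBackAsympStable_of_rev
  have hyD' : ∀ t ≥ (0 : ℝ), φ (t, y) ∈ D := fun t ht => by
    simpa using hyD (-t) (neg_nonpos.2 ht)
  exact ⟨⟨x, hx, hxD, hlim.tendsto_atBot hDc (eventually_atBot.2 ⟨0, hxD⟩)⟩,
    ⟨y, hy, hyD', hlim.tendsto_atTop hDc (eventually_atTop.2 ⟨0, hyD'⟩)⟩⟩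

/-- a singularity that is neither asymptotically stable nor backward
asymptotically stable has base orbits in `D` of both signs starting on `∂D`. -/
theorem exists_base_orbits {M : Type*} [MetricSpace M] [CompactSpace M]
    [ChartedSpace (EuclideanSpace ℝ (Fin 2)) M]
    (φ : ℝ × M → M) (hφ : IsFlow φ) (hsh : OrientedShadowing φ)
    (p : M) (hp : IsSingularity φ p)
    (D : Set M) (hD : IsDiskNbhd p D) (hlim : NoLimitPointsExcept φ p D)
    (hns : ¬ IsAsympStable φ {p}) (hnu : ¬ IsBackAsympStable φ {p}) :
    (∃ x ∈ frontier D, (∀ t ≤ (0:ℝ), φ (t, x) ∈ D) ∧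
        Tendsto (fun t => φ (t, x)) atBot (nhds p)) ∧
    (∃ y ∈ frontier D, (∀ t ≥ (0:ℝ), φ (t, y) ∈ D) ∧
        Tendsto (fun t => φ (t, y)) atTop (nhds p)) :=
  exists_base_orbits_general φ hφ hsh p hp D hD hlim hns hnu
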